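/- Let B be a family of subsets of a set X, and define the height of B to be the largest d such that there exist B_1,...,B_d ∈ B with B_1 ⊋ B_1∩B_2 ⊋ ... ⊋ B_1∩...∩B_d ≠ ∅. If B has height d > 0, then B has breadth at most d. Moreover, if B has height d > 1 and contains a largest element with respect to inclusion, then B has breadth strictly less than d. -/
import Mathlib

/-- `𝓑` has breadth at most `d`: every nonempty intersection of more than `d`
members equals an intersection of `d` of them. -/
def BreadthLE {X : Type*} (𝓑 : Set (Set X)) (d : ℕ) : Prop :=
  ∀ (m : ℕ) (A : Fin m → Set X), d < m → (∀ i, A i ∈ 𝓑) →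
    (⋂ i, A i).Nonempty →
    ∃ s : Finset (Fin m), s.card = d ∧ (⋂ i ∈ s, A i) = ⋂ i, A i

/-- A witness that `𝓑` has height at least `m`: members `B₁,…,B_m` with
`B₁ ⊋ B₁∩B₂ ⊋ ⋯ ⊋ B₁∩⋯∩B_m ≠ ∅`. -/
def HeightWit {X : Type*} (𝓑 : Set (Set X)) (m : ℕ) : Prop :=
  ∃ B : Fin m → Set X, (∀ i, B i ∈ 𝓑) ∧ (⋂ i, B i).Nonempty ∧
    ∀ k : ℕ, k + 1 < m →
      (⋂ i : Fin m, ⋂ (_ : (i : ℕ) ≤ k + 1), B i) ⊂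
        ⋂ i : Fin m, ⋂ (_ : (i : ℕ) ≤ k), B i

namespace Stmt16Aux

variable {X : Type*}

/-- Intersection of the members of a list of sets. -/
def interL (L : List (Set X)) : Set X := ⋂ S ∈ L, S

lemma mem_interL {x : X} {L : List (Set X)} : x ∈ interL L ↔ ∀ S ∈ L, x ∈ S := by
  simp [interL]

lemma interL_nil : interL ([] : List (Set X)) = Set.univ := by
  ext x; simp [mem_interL]

lemma interL_cons (S : Set X) (L : List (Set X)) :
    interL (S :: L) = S ∩ interL L := by
  ext x; simp [mem_interL]

lemma interL_append_singleton (L : List (Set X)) (S : Set X) :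
    interL (L ++ [S]) = interL L ∩ S := by
  ext x
  simp only [mem_interL, Set.mem_inter_iff, List.mem_append, List.mem_singleton]
  constructor
  · intro h
    exact ⟨fun S' hS' => h S' (Or.inl hS'), h S (Or.inr rfl)⟩
  · rintro ⟨h1, h2⟩ S' (h | rfl)
    exacts [h1 S' h, h2]

/-- The prefix intersections of `L` strictly decrease (from prefix length 1 on). -/
def ChainL (L : List (Set X)) : Prop :=
  ∀ t, 1 ≤ t → t < L.length → interL (L.take (t+1)) ⊂ interL (L.take t)

lemma bridge (L : List (Set X)) (n : ℕ) (hn : L.length = n) (k : ℕ) :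
    (⋂ i : Fin n, ⋂ (_ : (i : ℕ) ≤ k), L.get (Fin.cast hn.symm i)) = interL (L.take (k+1)) := by
  ext x
  simp only [Set.mem_iInter, mem_interL]
  constructor
  · intro h S hS
    obtain ⟨i, hi, rfl⟩ := List.mem_iff_getElem.1 hS
    have h1 : i < k + 1 := lt_of_lt_of_le hi (by simp [List.length_take])
    have h2 : i < L.length := lt_of_lt_of_le hi (by simp [List.length_take])
    have := h ⟨i, by omega⟩ (by simpa using Nat.lt_succ_iff.1 h1)
    simpa [List.getElem_take] using this
  · intro h i hik
    have h2 : (i : ℕ) < L.length := by omega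
    have h3 : (i : ℕ) < (L.take (k+1)).length := by simp [List.length_take]; omega
    have := h ((L.take (k+1))[(i : ℕ)]) (List.getElem_mem h3)
    simpa [List.getElem_take] using this

lemma full (L : List (Set X)) (n : ℕ) (hn : L.length = n) :
    (⋂ i : Fin n, L.get (Fin.cast hn.symm i)) = interL L := by
  ext x
  simp only [Set.mem_iInter, mem_interL]
  constructor
  · intro h S hS
    obtain ⟨i, hi, rfl⟩ := List.mem_iff_getElem.1 hS
    simpa using h ⟨i, by omega⟩
  · intro h i
    exact h _ (List.get_mem ..)

lemma chain_to_wit (𝓑 : Set (Set X)) (L : List (Set X)) (hL : ∀ S ∈ L, S ∈ 𝓑)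
    (hchain : ChainL L) (hne : (interL L).Nonempty) (n : ℕ) (hn : L.length = n) :
    HeightWit 𝓑 n := by
  refine ⟨fun i => L.get (Fin.cast hn.symm i), fun i => hL _ (List.get_mem ..), ?_, ?_⟩
  · rw [full L n hn]; exact hne
  · intro k hk
    rw [bridge L n hn, bridge L n hn]
    exact hchain (k+1) (by omega) (by omega)

lemma iInter_subset_interL {m : ℕ} (A : Fin m → Set X) (l : List (Fin m)) :
    (⋂ i, A i) ⊆ interL (l.map A) := by
  intro x hx
  rw [mem_interL]
  rintro S hS
  obtain ⟨i, -, rfl⟩ := List.mem_map.1 hS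
  exact Set.mem_iInter.1 hx i

lemma greedy {m : ℕ} (A : Fin m → Set X) (k : ℕ) :
    ∃ l : List (Fin m), ChainL (l.map A) ∧
      (l.length = k ∨ (l.length < k ∧ interL (l.map A) = ⋂ i, A i)) := by
  induction k with
  | zero =>
    refine ⟨[], fun t ht1 ht2 => ?_, Or.inl rfl⟩
    simp at ht2
  | succ k ih =>
    obtain ⟨l, hch, hlen⟩ := ih
    rcases hlen with hlen | ⟨hlt, heq⟩
    · by_cases heq : interL (l.map A) = ⋂ i, A i
      · exact ⟨l, hch, Or.inr ⟨by omega, heq⟩⟩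
      · have hss : (⋂ i, A i) ⊂ interL (l.map A) :=
          (iInter_subset_interL A l).ssubset_of_ne (fun h => heq h.symm)
        obtain ⟨x, hxI, hxA⟩ := Set.exists_of_ssubset hss
        have : ∃ j, x ∉ A j := by
          by_contra h
          push_neg at h
          exact hxA (Set.mem_iInter.2 h)
        obtain ⟨j, hxj⟩ := this
        refine ⟨l ++ [j], ?_, Or.inl (by simp [hlen])⟩
        intro t ht1 ht2
        simp only [List.map_append, List.map_cons, List.map_nil, List.length_append,
          List.length_map, List.length_cons, List.length_nil] at ht2 ⊢
        rcases lt_or_ge t (l.map A).length with h | h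
        · rw [List.take_append_of_le_length (by simpa using h),
            List.take_append_of_le_length (le_of_lt (by simpa using h))]
          exact hch t ht1 (by simpa using h)
        · have ht : t = l.length := by simp at h; omega
          have e1 : (l.map A ++ [A j]).take (t+1) = l.map A ++ [A j] := by
            rw [List.take_of_length_le]; simp [ht]
          have e2 : (l.map A ++ [A j]).take t = l.map A := by
            rw [List.take_append_of_le_length (by simp [ht]),
              List.take_of_length_le (by simp [ht])]
          rw [e1, e2, interL_append_singleton]
          have hsub : interL (l.map A) ∩ A j ⊆ interL (l.map A) := Set.inter_subset_left
          refine hsub.ssubset_of_ne fun hEq => hxj ?_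
          rw [← hEq] at hxI
          exact hxI.2
    · exact ⟨l, hch, Or.inr ⟨by omega, heq⟩⟩

lemma wit_of_chain (𝓑 : Set (Set X)) {m : ℕ} (A : Fin m → Set X) (hA : ∀ i, A i ∈ 𝓑)
    (l : List (Fin m)) (hch : ChainL (l.map A)) (hne : (⋂ i, A i).Nonempty)
    (n : ℕ) (hn : l.length = n) : HeightWit 𝓑 n := by
  refine chain_to_wit 𝓑 (l.map A) ?_ hch ?_ n (by simpa using hn)
  · rintro S hS
    obtain ⟨i, -, rfl⟩ := List.mem_map.1 hS
    exact hA i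
  · obtain ⟨x, hx⟩ := hne
    exact ⟨x, iInter_subset_interL A l hx⟩

lemma finish {m : ℕ} (A : Fin m → Set X) (l : List (Fin m))
    (heq : interL (l.map A) = ⋂ i, A i) (c : ℕ) (hlc : l.length ≤ c) (hcm : c ≤ m) :
    ∃ s : Finset (Fin m), s.card = c ∧ (⋂ i ∈ s, A i) = ⋂ i, A i := by
  obtain ⟨s, hsub, hcard⟩ := Finset.exists_superset_card_eq
    (le_trans (List.toFinset_card_le l) hlc) (by simpa using hcm)
  refine ⟨s, hcard, Set.Subset.antisymm ?_ ?_⟩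
  · intro x hx
    rw [← heq, mem_interL]
    rintro S hS
    obtain ⟨i, hi, rfl⟩ := List.mem_map.1 hS
    exact Set.mem_iInter₂.1 hx i (hsub (List.mem_toFinset.2 hi))
  · intro x hx
    exact Set.mem_iInter₂.2 fun i _ => Set.mem_iInter.1 hx i

lemma interL_take_cons_head (S : Set X) (L : List (Set X)) (s : ℕ) :
    interL ((S :: L).take (s+1)) ⊆ S := by
  rw [List.take_succ_cons, interL_cons]
  exact Set.inter_subset_left

end Stmt16Aux

open Stmt16Aux in
/-- If `𝓑` has height `d > 0` then its breadth is at most `d`; moreover, if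
`d > 1` and `𝓑` contains a largest element, then the breadth is less than `d`. -/
theorem stmt16 {X : Type*} (𝓑 : Set (Set X)) (d : ℕ) (hd : 0 < d)
    (hwit : HeightWit 𝓑 d) (hmax : ¬ HeightWit 𝓑 (d + 1)) :
    BreadthLE 𝓑 d ∧
      (1 < d → (∃ T ∈ 𝓑, ∀ B ∈ 𝓑, B ⊆ T) → BreadthLE 𝓑 (d - 1)) := by
  constructor
  · intro m A hdm hA hne
    obtain ⟨l, hch, hlen⟩ := greedy A (d+1)
    rcases hlen with hlen | ⟨hlt, heq⟩
    · exact absurd (wit_of_chain 𝓑 A hA l hch hne (d+1) hlen) hmax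
    · exact finish A l heq d (by omega) (by omega)
  · rintro h1d ⟨T, hT, hTmax⟩ m A hdm hA hne
    obtain ⟨l, hch, hlen⟩ := greedy A (d+1)
    rcases hlen with hlen | ⟨hlt, heq⟩
    · exact absurd (wit_of_chain 𝓑 A hA l hch hne (d+1) hlen) hmax
    · by_cases hld : l.length ≤ d - 1
      · have hdm' : d - 1 ≤ m := by omega
        exact finish A l heq (d-1) hld hdm'
      · have hldd : l.length = d := by omega
        obtain ⟨j₀, tl, rfl⟩ := List.exists_cons_of_ne_nil
          (show l ≠ [] from List.ne_nil_of_length_pos (by omega))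
        by_cases hTj : A j₀ = T
        · -- drop the head, whose set is the top element
          obtain ⟨j₁, tl', rfl⟩ := List.exists_cons_of_ne_nil
            (show tl ≠ [] from List.ne_nil_of_length_pos (by simp at hldd; omega))
          have habs : interL ((j₁ :: tl').map A) ⊆ A j₀ := by
            refine subset_trans ?_ (hTj ▸ hTmax _ (hA j₁))
            rw [List.map_cons, interL_cons]
            exact Set.inter_subset_left
          have heq' : interL ((j₁ :: tl').map A) = ⋂ i, A i := by
            rw [← heq]
            have h2 : interL ((j₀ :: j₁ :: tl').map A) =
                A j₀ ∩ interL ((j₁ :: tl').map A) := by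
              rw [List.map_cons, interL_cons]
            rw [h2, Set.inter_eq_self_of_subset_right habs]
          exact finish A (j₁ :: tl') heq' (d-1) (by simp at hldd ⊢; omega) (by omega)
        · -- prepend the top element to get a chain of length d+1, contradiction
          exfalso
          apply hmax
          have hss : A j₀ ⊂ T := (hTmax _ (hA j₀)).ssubset_of_ne hTj
          set L : List (Set X) := (j₀ :: tl).map A with hL
          have hLlen : L.length = d := by rw [hL]; simpa using hldd
          have hheadsub : ∀ s : ℕ, interL (L.take (s+1)) ⊆ A j₀ := by
            intro s
            have : L = A j₀ :: tl.map A := by simp [hL]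
            rw [this]
            exact interL_take_cons_head _ _ s
          refine chain_to_wit 𝓑 (T :: L) ?_ ?_ ?_ (d+1) (by simp [hLlen])
          · rintro S hS
            rcases List.mem_cons.1 hS with rfl | hS
            · exact hT
            · obtain ⟨i, -, rfl⟩ := List.mem_map.1 hS
              exact hA i
          · -- chain property for T :: L
            intro t ht1 ht2
            simp only [List.length_cons, hLlen] at ht2
            match t, ht1 with
            | 1, _ =>
              have e1 : (T :: L).take 2 = T :: L.take 1 := by
                rw [List.take_succ_cons]
              have e2 : (T :: L).take 1 = [T] := by
                rw [List.take_succ_cons, List.take_zero]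
              have e3 : L.take 1 = [A j₀] := by
                have : L = A j₀ :: tl.map A := by simp [hL]
                rw [this, List.take_succ_cons, List.take_zero]
              rw [e1, e2, e3, interL_cons, interL_cons, interL_nil, interL_cons, interL_nil,
                Set.inter_univ, Set.inter_univ,
                Set.inter_eq_self_of_subset_right hss.subset]
              exact hss
            | (s+2), _ =>
              have e1 : (T :: L).take (s+3) = T :: L.take (s+2) := List.take_succ_cons ..
              have e2 : (T :: L).take (s+2) = T :: L.take (s+1) := List.take_succ_cons ..
              rw [e1, e2, interL_cons, interL_cons,
                Set.inter_eq_self_of_subset_right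
                  ((hheadsub (s+1)).trans hss.subset),
                Set.inter_eq_self_of_subset_right
                  ((hheadsub s).trans hss.subset)]
              exact hch (s+1) (by omega) (by simp [hLlen]; omega)
          · -- nonempty
            obtain ⟨x, hx⟩ := hne
            refine ⟨x, ?_⟩
            rw [interL_cons]
            refine ⟨(hTmax _ (hA j₀)) (Set.mem_iInter.1 hx j₀), ?_⟩
            exact iInter_subset_interL A (j₀ :: tl) hx
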